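/- arXiv:1103.5116 — 2 statements merged into one kernel-verified Lean document; each statement's English description precedes it below -/
import Mathlib

section
/- Let (X,d) be a metric space, δ > 0, α ∈ (0,1), C ≥ 0 and D > 0. Suppose u : X → ℝ satisfies |u(x) − u(y)| ≤ C·d(x,y)^α whenever d(x,y) ≤ δ, and suppose that for every x, y ∈ X and every positive integer n there exist points p₀ = x, p₁, …, pₙ = y with d(p_j, p_{j+1}) ≤ d(x,y)/√n for all j. Then for all x, y ∈ X with d(x,y) ≤ D one has |u(x) − u(y)| ≤ C·(4D²/δ² + 1)·d(x,y)^α. -/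
/-!
Take `n ≈ (d(x,y)/δ)²` steps of a chain from `x` to `y` whose links have length at most
`d(x,y)/√n ≤ min δ (d(x,y))`. The local estimate bounds the increment of `u` along each link by
`C d(x,y)^α`, so `|u x - u y| ≤ n C d(x,y)^α`, and `n ≤ d(x,y)²/δ² + 1 ≤ 4D²/δ² + 1`.
-/

open Real

lemma exists_nat_pos_le_sqrt_le_sq_add_one (t : ℝ) :
    ∃ n : ℕ, 0 < n ∧ t ≤ √n ∧ (n : ℝ) ≤ t ^ 2 + 1 := by
  refine ⟨max 1 ⌈t ^ 2⌉₊, by positivity, le_sqrt_of_sq_le ?_, ?_⟩ <;> push_cast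
  · exact (Nat.le_ceil _).trans (le_max_right _ _)
  · exact max_le (by linarith [sq_nonneg t]) (Nat.ceil_lt_add_one (sq_nonneg t)).le

lemma abs_sub_le_mul_of_abs_sub_succ_le {f : ℕ → ℝ} {n : ℕ} {M : ℝ}
    (h : ∀ j < n, |f j - f (j + 1)| ≤ M) : |f 0 - f n| ≤ n * M := by
  simpa [Real.dist_eq] using dist_le_range_sum_of_dist_le (f := f) n (fun hj => h _ hj)

lemma abs_sub_le_of_chain_of_local_holder {X : Type*} [PseudoMetricSpace X] {u : X → ℝ}
    {δ C α s : ℝ} (hC : 0 ≤ C) (hα : 0 ≤ α)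
    (hloc : ∀ x y : X, dist x y ≤ δ → |u x - u y| ≤ C * dist x y ^ α) (hsδ : s ≤ δ)
    {p : ℕ → X} {n : ℕ} (hp : ∀ j < n, dist (p j) (p (j + 1)) ≤ s) :
    |u (p 0) - u (p n)| ≤ n * (C * s ^ α) :=
  abs_sub_le_mul_of_abs_sub_succ_le (f := u ∘ p) fun j hj =>
    (hloc _ _ ((hp j hj).trans hsδ)).trans (by gcongr; exact hp j hj)

theorem stmt0_general {X : Type*} [MetricSpace X] (δ : ℝ) (hδ : 0 < δ)
    (α : ℝ) (hα : α ∈ Set.Ioo (0:ℝ) 1) (C : ℝ) (hC : 0 ≤ C) (D : ℝ)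
    (u : X → ℝ)
    (hloc : ∀ x y : X, dist x y ≤ δ → |u x - u y| ≤ C * dist x y ^ α)
    (hchain : ∀ x y : X, ∀ n : ℕ, 0 < n → ∃ p : ℕ → X, p 0 = x ∧ p n = y ∧
      ∀ j < n, dist (p j) (p (j + 1)) ≤ dist x y / Real.sqrt n)
    (x y : X) (hxy : dist x y ≤ D) :
    |u x - u y| ≤ C * (4 * D ^ 2 / δ ^ 2 + 1) * dist x y ^ α := by
  set d := dist x y
  obtain ⟨n, hn, hsqrt, hn_le⟩ := exists_nat_pos_le_sqrt_le_sq_add_one (d / δ)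
  obtain ⟨p, hp0, hpn, hp⟩ := hchain x y n hn
  have hsqrt_pos : 0 < √n := sqrt_pos.mpr (by exact_mod_cast hn)
  have hstep_δ : d / √n ≤ δ := by
    rw [div_le_iff₀ hsqrt_pos, mul_comm]; rwa [div_le_iff₀ hδ] at hsqrt
  have hstep_d : d / √n ≤ d :=
    div_le_self dist_nonneg (one_le_sqrt.mpr (by exact_mod_cast hn))
  have hn_le' : (n : ℝ) ≤ 4 * D ^ 2 / δ ^ 2 + 1 :=
    calc (n : ℝ) ≤ d ^ 2 / δ ^ 2 + 1 := by rwa [div_pow] at hn_le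
      _ ≤ 4 * D ^ 2 / δ ^ 2 + 1 := by gcongr; nlinarith [dist_nonneg (x := x) (y := y)]
  calc |u x - u y| = |u (p 0) - u (p n)| := by rw [hp0, hpn]
    _ ≤ n * (C * (d / √n) ^ α) := abs_sub_le_of_chain_of_local_holder hC hα.1.le hloc hstep_δ hp
    _ ≤ (4 * D ^ 2 / δ ^ 2 + 1) * (C * d ^ α) := by gcongr; exact hα.1.le
    _ = C * (4 * D ^ 2 / δ ^ 2 + 1) * d ^ α := by ring

theorem stmt0 {X : Type*} [MetricSpace X] (δ : ℝ) (hδ : 0 < δ)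
    (α : ℝ) (hα : α ∈ Set.Ioo (0:ℝ) 1) (C : ℝ) (hC : 0 ≤ C) (D : ℝ) (hD : 0 < D)
    (u : X → ℝ)
    (hloc : ∀ x y : X, dist x y ≤ δ → |u x - u y| ≤ C * dist x y ^ α)
    (hchain : ∀ x y : X, ∀ n : ℕ, 0 < n → ∃ p : ℕ → X, p 0 = x ∧ p n = y ∧
      ∀ j < n, dist (p j) (p (j + 1)) ≤ dist x y / Real.sqrt n)
    (x y : X) (hxy : dist x y ≤ D) :
    |u x - u y| ≤ C * (4 * D ^ 2 / δ ^ 2 + 1) * dist x y ^ α :=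
  stmt0_general δ hδ α hα C hC D u hloc hchain x y hxy
end

section
/- Let (X,d,μ) be a metric measure space and let r₀ > 0, C_D ≥ 1 be such that 0 < μ(B(x,2r)) ≤ C_D·μ(B(x,r)) < ∞ for all x ∈ X and 0 < r ≤ r₀. Let α ∈ (0,1), let u : X → ℝ be continuous and locally integrable, and set M = sup { inf_{c∈ℝ} (1/(r^α·μ(B(x,r))))·∫_{B(x,r)} |u(y) − c| dμ(y) : x ∈ X, 0 < r ≤ r₀ }. If M < ∞, then there exists a constant K depending only on C_D and α such that |u(x) − u(y)| ≤ K·M·d(x,y)^α for all x, y ∈ X with 2·d(x,y) ≤ r₀. -/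
/-!
If a constant `c` approximates `u` in mean to within `B` on `B(z, s)`, compare it with the
Campanato constant `c₁` of the half ball: doubling gives `|c - c₁| ≤ C B + N (s/2)^α`. Iterating
down the dyadic balls `B(z, 2⁻ᵏ s)` the errors form a geometric series in `2^(-α)`, and once the
radius is below the modulus of continuity of `u` at `z` the constant is within `δ` of `u z`;
hence `|u z - c| ≤ C B + κ N s^α` with `κ = 2C / (1 - 2^(-α))`. For two points at distance `d`,
apply this at `x` to the Campanato constant of `B(x, 2d)` and at `y` to the same constant on
`B(y, d) ⊆ B(x, 2d)`, whose measure is comparable by doubling twice.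
-/

open MeasureTheory Metric Filter Topology

section MeanOscillation

variable {Ω : Type*} [MeasurableSpace Ω] {μ : Measure Ω} {s t : Set Ω} {f : Ω → ℝ}

lemma abs_sub_le_of_setIntegral_abs_sub_le (hf : IntegrableOn f s μ) (hs : 0 < μ.real s)
    {a b A B : ℝ} (ha : ∫ x in s, |f x - a| ∂μ ≤ A * μ.real s)
    (hb : ∫ x in s, |f x - b| ∂μ ≤ B * μ.real s) : |a - b| ≤ A + B := by
  have hs_fin : μ s ≠ ⊤ := (ENNReal.toReal_pos_iff.1 hs).2.ne
  have hfa : IntegrableOn (fun x => |f x - a|) s μ := (hf.sub (integrableOn_const hs_fin)).abs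
  have hfb : IntegrableOn (fun x => |f x - b|) s μ := (hf.sub (integrableOn_const hs_fin)).abs
  refine le_of_mul_le_mul_right ?_ hs
  calc |a - b| * μ.real s = ∫ _ in s, |a - b| ∂μ := by rw [setIntegral_const, smul_eq_mul, mul_comm]
    _ ≤ ∫ x in s, (|f x - a| + |f x - b|) ∂μ :=
        integral_mono (integrableOn_const hs_fin) (hfa.add hfb) fun x =>
          (abs_sub_le a (f x) b).trans_eq (by rw [abs_sub_comm a])
    _ = ∫ x in s, |f x - a| ∂μ + ∫ x in s, |f x - b| ∂μ := integral_add hfa hfb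
    _ ≤ (A + B) * μ.real s := by linarith

lemma setIntegral_abs_sub_le_of_subset (hf : IntegrableOn f s μ) (hs : μ s ≠ ⊤) (hts : t ⊆ s)
    {c A C : ℝ} (hA : 0 ≤ A) (hμ : μ.real s ≤ C * μ.real t)
    (h : ∫ x in s, |f x - c| ∂μ ≤ A * μ.real s) : ∫ x in t, |f x - c| ∂μ ≤ C * A * μ.real t :=
  calc ∫ x in t, |f x - c| ∂μ ≤ ∫ x in s, |f x - c| ∂μ :=
        setIntegral_mono_set (hf.sub (integrableOn_const hs)).abs
          (Eventually.of_forall fun _ => abs_nonneg _) hts.eventuallyLE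
    _ ≤ A * μ.real s := h
    _ ≤ A * (C * μ.real t) := mul_le_mul_of_nonneg_left hμ hA
    _ = C * A * μ.real t := by ring

end MeanOscillation

section LocallyDoubling

variable {X : Type*} [MetricSpace X] [MeasurableSpace X] {μ : Measure X} {C r₀ : ℝ}

def IsLocallyDoubling (μ : Measure X) (C r₀ : ℝ) : Prop :=
  ∀ (x : X) (r : ℝ), 0 < r → r ≤ r₀ →
    0 < μ (ball x r) ∧ μ (ball x (2 * r)) ≤ ENNReal.ofReal C * μ (ball x r) ∧ μ (ball x r) < ⊤

namespace IsLocallyDoubling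

variable {x : X} {r : ℝ}

lemma measure_ball_ne_top (hμ : IsLocallyDoubling μ C r₀) (hr : 0 < r) (hr₀ : r ≤ r₀) :
    μ (ball x r) ≠ ⊤ :=
  (hμ x r hr hr₀).2.2.ne

lemma measureReal_ball_pos (hμ : IsLocallyDoubling μ C r₀) (hr : 0 < r) (hr₀ : r ≤ r₀) :
    0 < μ.real (ball x r) :=
  ENNReal.toReal_pos (hμ x r hr hr₀).1.ne' (hμ.measure_ball_ne_top hr hr₀)

lemma measureReal_le_of_subset_ball_two_mul (hμ : IsLocallyDoubling μ C r₀) (hC : 0 ≤ C)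
    (hr : 0 < r) (hr₀ : r ≤ r₀) {t : Set X} (ht : t ⊆ ball x (2 * r)) :
    μ.real t ≤ C * μ.real (ball x r) := by
  have hfin : ENNReal.ofReal C * μ (ball x r) ≠ ⊤ :=
    ENNReal.mul_ne_top ENNReal.ofReal_ne_top (hμ.measure_ball_ne_top hr hr₀)
  calc μ.real t ≤ (ENNReal.ofReal C * μ (ball x r)).toReal :=
        ENNReal.toReal_mono hfin ((measure_mono ht).trans (hμ x r hr hr₀).2.1)
    _ = C * μ.real (ball x r) := by rw [ENNReal.toReal_mul, ENNReal.toReal_ofReal hC]; rfl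

end IsLocallyDoubling

end LocallyDoubling

section Campanato

variable {X : Type*} [MetricSpace X] [MeasurableSpace X] {μ : Measure X} {u : X → ℝ}
  {C α N r₀ : ℝ}

def HasCampanatoBound (μ : Measure X) (u : X → ℝ) (α N r₀ : ℝ) : Prop :=
  ∀ (x : X) (r : ℝ), 0 < r → r ≤ r₀ →
    ∃ c : ℝ, ∫ y in ball x r, |u y - c| ∂μ ≤ N * r ^ α * μ.real (ball x r)

/-- The sum of the geometric series `2 C ∑ₖ 2^(-kα)`. -/
noncomputable def campanatoConst (C α : ℝ) : ℝ := 2 * C / (1 - 2 ^ (-α))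

lemma two_rpow_neg_lt_one (hα : 0 < α) : (2 : ℝ) ^ (-α) < 1 :=
  Real.rpow_lt_one_of_one_lt_of_neg one_lt_two (neg_neg_of_pos hα)

lemma campanatoConst_nonneg (hC : 0 ≤ C) (hα : 0 < α) : 0 ≤ campanatoConst C α :=
  div_nonneg (by positivity) (sub_nonneg.2 (two_rpow_neg_lt_one hα).le)

lemma add_one_add_campanatoConst_mul_le (hC : 1 ≤ C) (hα : 0 < α) :
    (C + 1 + campanatoConst C α) * 2 ^ (-α) ≤ campanatoConst C α := by
  have hq := two_rpow_neg_lt_one hα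
  have hq₀ : (0 : ℝ) < 2 ^ (-α) := by positivity
  have hκ : campanatoConst C α * (1 - 2 ^ (-α)) = 2 * C :=
    div_mul_cancel₀ _ (sub_pos.2 hq).ne'
  nlinarith

lemma abs_sub_le_add_of_le_two_pow_mul (hμ : IsLocallyDoubling μ C r₀) (hC : 1 ≤ C)
    (hα : 0 < α) (hN : 0 ≤ N) (hcamp : HasCampanatoBound μ u α N r₀) {z : X}
    (hint : ∀ r, 0 < r → r ≤ r₀ → IntegrableOn u (ball z r) μ) {δ t₀ : ℝ}
    (hδ : ∀ w ∈ ball z t₀, |u w - u z| ≤ δ) (n : ℕ) {s c B : ℝ} (hs : 0 < s) (hsr₀ : s ≤ r₀)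
    (hst : s ≤ 2 ^ n * t₀) (hB : 0 ≤ B)
    (hc : ∫ y in ball z s, |u y - c| ∂μ ≤ B * μ.real (ball z s)) :
    |u z - c| ≤ C * B + campanatoConst C α * N * s ^ α + δ := by
  have hκ := campanatoConst_nonneg (zero_le_one.trans hC) hα
  induction n generalizing s c B with
  | zero =>
    have hosc : ∫ y in ball z s, |u y - u z| ∂μ ≤ δ * μ.real (ball z s) :=
      (Real.le_norm_self _).trans <|
        norm_setIntegral_le_of_norm_le_const (f := fun y => |u y - u z|)
        (lt_top_iff_ne_top.2 (hμ.measure_ball_ne_top hs hsr₀)) fun w hw => by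
          simpa using hδ w (ball_subset_ball (by simpa using hst) hw)
    have := abs_sub_le_of_setIntegral_abs_sub_le (hint s hs hsr₀)
      (hμ.measureReal_ball_pos hs hsr₀) hosc hc
    linarith [mul_le_mul_of_nonneg_right hC hB,
      mul_nonneg (mul_nonneg hκ hN) (Real.rpow_nonneg hs.le α)]
  | succ n ih =>
    have hs₂ : 0 < s / 2 := half_pos hs
    have hs₂r₀ : s / 2 ≤ r₀ := by linarith
    obtain ⟨c₁, hc₁⟩ := hcamp z (s / 2) hs₂ hs₂r₀
    have hz := ih hs₂ hs₂r₀ (by rw [pow_succ] at hst; linarith) (by positivity) hc₁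
    have hμs : μ.real (ball z s) ≤ C * μ.real (ball z (s / 2)) :=
      hμ.measureReal_le_of_subset_ball_two_mul (by linarith) hs₂ hs₂r₀
        (by rw [mul_div_cancel₀ s two_ne_zero])
    have hcc₁ : |c₁ - c| ≤ N * (s / 2) ^ α + C * B :=
      abs_sub_le_of_setIntegral_abs_sub_le (hint _ hs₂ hs₂r₀) (hμ.measureReal_ball_pos hs₂ hs₂r₀)
        hc₁ (setIntegral_abs_sub_le_of_subset (hint s hs hsr₀) (hμ.measure_ball_ne_top hs hsr₀)
          (ball_subset_ball (by linarith)) hB hμs hc)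
    have hpow : (s / 2) ^ α = 2 ^ (-α) * s ^ α := by
      rw [Real.div_rpow hs.le zero_le_two, Real.rpow_neg zero_le_two, div_eq_inv_mul]
    have hgeom := mul_le_mul_of_nonneg_right (add_one_add_campanatoConst_mul_le hC hα)
      (mul_nonneg hN (Real.rpow_nonneg hs.le α))
    rw [hpow] at hz hcc₁
    linarith [abs_sub_le (u z) c₁ c]

theorem abs_sub_le_of_hasCampanatoBound (hμ : IsLocallyDoubling μ C r₀) (hC : 1 ≤ C)
    (hα : 0 < α) {z : X} (hu : ContinuousAt u z)
    (hint : ∀ r, 0 < r → r ≤ r₀ → IntegrableOn u (ball z r) μ) (hN : 0 ≤ N)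
    (hcamp : HasCampanatoBound μ u α N r₀) {s c B : ℝ} (hs : 0 < s) (hsr₀ : s ≤ r₀)
    (hB : 0 ≤ B) (hc : ∫ y in ball z s, |u y - c| ∂μ ≤ B * μ.real (ball z s)) :
    |u z - c| ≤ C * B + campanatoConst C α * N * s ^ α := by
  refine le_of_forall_pos_le_add fun δ hδ => ?_
  obtain ⟨t₀, ht₀, hcont⟩ := Metric.continuousAt_iff.mp hu δ hδ
  obtain ⟨n, hn⟩ := pow_unbounded_of_one_lt (s / t₀) one_lt_two
  rw [div_lt_iff₀ ht₀] at hn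
  exact abs_sub_le_add_of_le_two_pow_mul hμ hC hα hN hcamp hint
    (fun w hw => (hcont hw).le) n hs hsr₀ hn.le hB hc

theorem abs_sub_le_mul_dist_rpow_of_hasCampanatoBound (hμ : IsLocallyDoubling μ C r₀)
    (hC : 1 ≤ C) (hα : 0 < α) (hu : Continuous u)
    (hint : ∀ (x : X) (r : ℝ), 0 < r → r ≤ r₀ → IntegrableOn u (ball x r) μ) (hN : 0 ≤ N)
    (hcamp : HasCampanatoBound μ u α N r₀) {x y : X} (hxy : 2 * dist x y ≤ r₀) :
    |u x - u y| ≤ 2 ^ α * (C + C ^ 3 + 2 * campanatoConst C α) * N * dist x y ^ α := by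
  have hC₀ : 0 ≤ C := zero_le_one.trans hC
  have hκ := campanatoConst_nonneg hC₀ hα
  rcases (dist_nonneg (x := x) (y := y)).eq_or_lt with hd | hd
  · obtain rfl := dist_eq_zero.1 hd.symm
    simp [Real.zero_rpow hα.ne']
  set d := dist x y with hd_def
  have h2d : 0 < 2 * d := by positivity
  have hdr₀ : d ≤ r₀ := by linarith
  obtain ⟨c, hc⟩ := hcamp x (2 * d) h2d hxy
  have hx := abs_sub_le_of_hasCampanatoBound hμ hC hα hu.continuousAt (hint x) hN hcamp h2d hxy
    (by positivity) hc
  have hμxy : μ.real (ball x (2 * d)) ≤ C ^ 2 * μ.real (ball y d) :=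
    calc μ.real (ball x (2 * d)) ≤ C * μ.real (ball y (2 * d)) :=
          hμ.measureReal_le_of_subset_ball_two_mul hC₀ h2d hxy
            (ball_subset_ball' (by linarith))
      _ ≤ C * (C * μ.real (ball y d)) := mul_le_mul_of_nonneg_left
          (hμ.measureReal_le_of_subset_ball_two_mul hC₀ hd hdr₀ subset_rfl) hC₀
      _ = C ^ 2 * μ.real (ball y d) := by ring
  have hy := abs_sub_le_of_hasCampanatoBound hμ hC hα hu.continuousAt (hint y) hN hcamp hd hdr₀
    (by positivity) (setIntegral_abs_sub_le_of_subset (hint x _ h2d hxy)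
      (hμ.measure_ball_ne_top h2d hxy) (ball_subset_ball' (by linarith [dist_comm x y]))
      (by positivity) hμxy hc)
  have hpow : (2 * d) ^ α = 2 ^ α * d ^ α := Real.mul_rpow zero_le_two hd.le
  have h2α : 1 ≤ (2 : ℝ) ^ α := Real.one_le_rpow one_le_two hα.le
  rw [hpow] at hx hy
  nlinarith [abs_sub_le (u x) c (u y), abs_sub_comm c (u y),
    mul_nonneg (sub_nonneg.2 h2α) (by positivity : 0 ≤ campanatoConst C α * N * d ^ α)]

end Campanato

theorem stmt14 (C_D α : ℝ) (hCD : 1 ≤ C_D) (hα : α ∈ Set.Ioo (0:ℝ) 1) :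
    ∃ K : ℝ, ∀ (X : Type) [MetricSpace X] [MeasurableSpace X] [BorelSpace X]
      (μ : Measure X) (r₀ : ℝ), 0 < r₀ →
      (∀ (x : X) (r : ℝ), 0 < r → r ≤ r₀ →
        0 < μ (ball x r) ∧
        μ (ball x (2 * r)) ≤ ENNReal.ofReal C_D * μ (ball x r) ∧
        μ (ball x r) < ⊤) →
      ∀ u : X → ℝ, Continuous u →
      (∀ (x : X) (r : ℝ), 0 < r → r ≤ r₀ → IntegrableOn u (ball x r) μ) →
      ∀ M : ℝ, 0 ≤ M →
      (∀ (x : X) (r : ℝ), 0 < r → r ≤ r₀ → ∀ ε : ℝ, 0 < ε → ∃ c : ℝ,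
        ∫ y in ball x r, |u y - c| ∂μ ≤ (M + ε) * r ^ α * (μ (ball x r)).toReal) →
      ∀ x y : X, 2 * dist x y ≤ r₀ → |u x - u y| ≤ K * M * dist x y ^ α := by
  set K := 2 ^ α * (C_D + C_D ^ 3 + 2 * campanatoConst C_D α)
  refine ⟨K, fun X _ _ _ μ r₀ _ hμ u hu hint M hM hcamp x y hxy => ?_⟩
  have hcampN : ∀ N, M < N → HasCampanatoBound μ u α N r₀ := fun N hMN z r hr hr₀ =>
    (hcamp z r hr hr₀ (N - M) (sub_pos.2 hMN)).imp fun c hc => by rwa [add_sub_cancel] at hc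
  have hcont : Continuous fun N : ℝ => K * N * dist x y ^ α := by fun_prop
  refine ge_of_tendsto (hcont.tendsto M |>.mono_left nhdsWithin_le_nhds :
    Tendsto _ (𝓝[>] M) _) ?_
  filter_upwards [self_mem_nhdsWithin] with N (hMN : M < N)
  exact abs_sub_le_mul_dist_rpow_of_hasCampanatoBound hμ hCD hα.1 hu hint
    (hM.trans hMN.le) (hcampN N hMN) hxy
end
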